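/- In MvPolynomial (Fin 2) (ZMod 2) with u = x₀, v = x₁, let A₁ = Algebra.adjoin (ZMod 2) ({u·v} ∪ {u·v·(u^(2^n − 1) + v^(2^n − 1)) : n ≥ 1}) (the subalgebra generated by ι = uv together with all its Milnor images Q_i(ι), defining the unstable algebra H₂), and let A₂ = Algebra.adjoin (ZMod 2) {(u + v)^n · (u·v) : n ≥ 0} (the subalgebra generated by the classes w₁ⁿ·w₂, where w₁ = u + v and w₂ = uv are the images of the universal Stiefel–Whitney classes). Then A₁ ⊆ A₂, and for every x ∈ A₂ there exists k ∈ ℕ with x^(2^k) ∈ A₁; that is, the inclusion A₁ ⊆ A₂ is an F-isomorphism, so the two subalgebras coincide after quadratic/nilpotent closure and both present H₂. -/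

import Mathlib

/-!
Write `w₁ = u + v`, `w₂ = uv` and `pₘ = uᵐ + vᵐ`. In characteristic `2` Newton's identity reads
`pₘ₊₂ = w₁ pₘ₊₁ + w₂ pₘ`, so every `w₁ʲ w₂ pₘ` is a polynomial in the `w₁ⁿ w₂`; in particular
`A₁ ⊆ A₂`. Conversely, Newton's identity together with `p_(2c) = p_c²` gives
`w₁^(2ⁿ) w₂² = p_(2ⁿ) w₂² ∈ A₁` for every `n`, and then
`(w₁ᵃ w₂)^(2ᵏ) = (w₁^(2ᵏ) w₂²)ᵃ w₂^(2ᵏ - 2a) ∈ A₁` once `2ᵏ ≥ 2a`. The elements having some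
`2ᵏ`-th power in `A₁` form a subalgebra (the perfect closure of `A₁` in `F₂[u,v]`), so this
extends from the generators of `A₂` to all of `A₂`.
-/

open MvPolynomial

/-- `A₁`: the subalgebra of `F₂[u,v]` generated by `ι = uv` together with all its
Milnor images `Q_i(ι) = uv (u^{2^n-1} + v^{2^n-1})`, `n ≥ 1`; a presentation of `H₂`. -/
noncomputable def H2gen1 : Subalgebra (ZMod 2) (MvPolynomial (Fin 2) (ZMod 2)) :=
  Algebra.adjoin (ZMod 2)
    ({X 0 * X 1} ∪
      {p | ∃ n : ℕ, 1 ≤ n ∧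
        p = X 0 * X 1 * ((X 0 : MvPolynomial (Fin 2) (ZMod 2)) ^ (2 ^ n - 1) +
          (X 1 : MvPolynomial (Fin 2) (ZMod 2)) ^ (2 ^ n - 1))})

/-- `A₂`: the subalgebra of `F₂[u,v]` generated by the classes `w₁ⁿ w₂`,
`w₁ = u + v`, `w₂ = uv` being the universal Stiefel–Whitney classes. -/
noncomputable def H2gen2 : Subalgebra (ZMod 2) (MvPolynomial (Fin 2) (ZMod 2)) :=
  Algebra.adjoin (ZMod 2)
    {p | ∃ n : ℕ, p = ((X 0 : MvPolynomial (Fin 2) (ZMod 2)) + X 1) ^ n * (X 0 * X 1)}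

theorem exists_pow_expChar_pow_mem_of_mem_adjoin {R A : Type*} [CommSemiring R] [CommSemiring A]
    [Algebra R A] (p : ℕ) [ExpChar A p] (S : Subalgebra R A) {s : Set A}
    (hs : ∀ x ∈ s, ∃ n, x ^ p ^ n ∈ S) {x : A} (hx : x ∈ Algebra.adjoin R s) :
    ∃ n, x ^ p ^ n ∈ S := by
  have hle : Algebra.adjoin R s ≤ (Subalgebra.perfectClosure S A p).restrictScalars R :=
    Algebra.adjoin_le fun y hy ↦
      let ⟨n, hn⟩ := hs y hy
      ⟨n, ⟨⟨_, hn⟩, rfl⟩⟩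
  obtain ⟨n, y, hy⟩ := hle hx
  exact ⟨n, hy ▸ y.2⟩

theorem exists_pow_mul_pow_two_pow_mem {M S : Type*} [CommMonoid M] [SetLike S M]
    [SubmonoidClass S M] {s : S} {x y : M} (hy : y ∈ s) (hxy : ∀ n, x ^ 2 ^ n * y ^ 2 ∈ s)
    (a : ℕ) : ∃ k, (x ^ a * y) ^ 2 ^ k ∈ s := by
  have ha : 2 * a ≤ 2 ^ (a + 1) := by
    rw [pow_succ']
    exact Nat.mul_le_mul_left 2 Nat.lt_two_pow_self.le
  refine ⟨a + 1, ?_⟩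
  have h : (x ^ a * y) ^ 2 ^ (a + 1) =
      (x ^ 2 ^ (a + 1) * y ^ 2) ^ a * y ^ (2 ^ (a + 1) - 2 * a) := by
    rw [mul_pow, mul_pow, ← pow_mul, ← pow_mul, ← pow_mul, mul_comm a, mul_assoc, ← pow_add,
      Nat.add_sub_cancel' ha]
  rw [h]
  exact mul_mem (pow_mem (hxy _) a) (pow_mem hy _)

namespace CharTwo

variable {A S : Type*} [CommRing A] [CharP A 2] [SetLike S A] [SubsemiringClass S A] {s : S}

theorem pow_add_pow_add_two (x y : A) (m : ℕ) :
    x ^ (m + 2) + y ^ (m + 2) = (x + y) * (x ^ (m + 1) + y ^ (m + 1)) + x * y * (x ^ m + y ^ m) := by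
  rw [← sub_eq_add (_ * _)]
  ring

theorem add_pow_mul_mul_pow_add_pow_mem {x y : A} (h : ∀ n, (x + y) ^ n * (x * y) ∈ s)
    (m j : ℕ) : (x + y) ^ j * (x * y) * (x ^ m + y ^ m) ∈ s := by
  induction m using Nat.twoStepInduction generalizing j with
  | zero => simp
  | one => simpa [mul_right_comm, ← pow_succ] using h (j + 1)
  | more m ih ih' =>
    have hsplit := add_mem (ih' (j + 1)) (mul_mem (by simpa using h 0) (ih j))
    convert hsplit using 1
    rw [pow_add_pow_add_two]
    ring

theorem pow_add_pow_mul_sq (x y : A) (c : ℕ) :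
    (x ^ (2 * c + 2) + y ^ (2 * c + 2)) * (x * y) ^ 2 =
      (x + y) * (x * y) * (x * y * (x ^ (2 * c + 1) + y ^ (2 * c + 1))) +
        x * y * (x * y * (x ^ c + y ^ c)) ^ 2 := by
  rw [pow_add_pow_add_two, mul_pow _ (x ^ c + y ^ c), add_sq, pow_mul, pow_mul]
  ring

theorem add_pow_two_pow_mul_sq_mem {x y : A} (hxy : x * y ∈ s)
    (hq : ∀ n, x * y * (x ^ (2 ^ n - 1) + y ^ (2 ^ n - 1)) ∈ s) (n : ℕ) :
    (x + y) ^ 2 ^ n * (x * y) ^ 2 ∈ s := by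
  have h1 : (x + y) * (x * y) ∈ s := by simpa [mul_comm] using hq 1
  cases n with
  | zero =>
    rw [pow_zero, pow_one, sq, ← mul_assoc]
    exact mul_mem h1 hxy
  | succ n =>
    have hc : 2 ^ (n + 1) = 2 * (2 ^ n - 1) + 2 := by
      have := Nat.one_le_two_pow (n := n)
      rw [pow_succ]
      omega
    have hc' : 2 * (2 ^ n - 1) + 1 = 2 ^ (n + 1) - 1 := by omega
    rw [add_pow_char_pow, hc, pow_add_pow_mul_sq, hc']
    exact add_mem (mul_mem h1 (hq (n + 1))) (mul_mem hxy (pow_mem (hq n) 2))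

end CharTwo

theorem X_zero_mul_X_one_mem_H2gen1 : (X 0 * X 1 : MvPolynomial (Fin 2) (ZMod 2)) ∈ H2gen1 :=
  Algebra.subset_adjoin (Or.inl rfl)

theorem X_zero_mul_X_one_mul_pow_add_pow_mem_H2gen1 (n : ℕ) :
    X 0 * X 1 * ((X 0 : MvPolynomial (Fin 2) (ZMod 2)) ^ (2 ^ n - 1) + X 1 ^ (2 ^ n - 1)) ∈
      H2gen1 := by
  rcases n.eq_zero_or_pos with rfl | hn
  · simp [← two_mul, CharTwo.two_eq_zero]
  · exact Algebra.subset_adjoin (Or.inr ⟨n, hn, rfl⟩)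

theorem H2gen1_le_H2gen2 : H2gen1 ≤ H2gen2 := by
  have hgen : ∀ n, ((X 0 : MvPolynomial (Fin 2) (ZMod 2)) + X 1) ^ n * (X 0 * X 1) ∈ H2gen2 :=
    fun n ↦ Algebra.subset_adjoin ⟨n, rfl⟩
  refine Algebra.adjoin_le ?_
  rintro _ (rfl | ⟨n, -, rfl⟩)
  · simpa using hgen 0
  · simpa using CharTwo.add_pow_mul_mul_pow_add_pow_mem hgen (2 ^ n - 1) 0

theorem H2_presentations_F_isomorphic :
    H2gen1 ≤ H2gen2 ∧
      ∀ x ∈ H2gen2, ∃ k : ℕ, x ^ 2 ^ k ∈ H2gen1 := by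
  refine ⟨H2gen1_le_H2gen2, fun x hx ↦ exists_pow_expChar_pow_mem_of_mem_adjoin 2 H2gen1 ?_ hx⟩
  rintro _ ⟨n, rfl⟩
  exact exists_pow_mul_pow_two_pow_mem X_zero_mul_X_one_mem_H2gen1
    (CharTwo.add_pow_two_pow_mul_sq_mem X_zero_mul_X_one_mem_H2gen1
      X_zero_mul_X_one_mul_pow_add_pow_mem_H2gen1) n
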